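/- arXiv:1705.03810 — 6 statements merged into one kernel-verified Lean document; each statement's English description precedes it below -/
import Mathlib

section
/- Let (H, A, ‖·‖♯) be a CS space with bound L > 0, let 1 ≤ p < ∞, and let Φ : H → ℝ^m be a linear map satisfying the (p, ρ, α)-robust width property over B♯ with ρ > 0, α > 0 and ρ ≤ 1/(4L). Then for every x♮ ∈ H, every ε ≥ 0, every e ∈ ℝ^m with ‖e‖_{ℓp} ≤ ε, setting y = Φx♮ + e, every x⋆ ∈ H that is a minimizer of ‖x‖♯ subject to ‖Φx − y‖_{ℓp} ≤ ε (i.e., ‖Φx⋆ − y‖_{ℓp} ≤ ε and ‖x⋆‖♯ ≤ ‖x‖♯ for every x ∈ H with ‖Φx − y‖_{ℓp} ≤ ε) satisfies ‖x⋆ − x♮‖₂ ≤ 4ρ‖x♮ − a‖♯ + (2/α)ε for every a ∈ A. -/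
/-!
Let `h = x⋆ - x♮`. Minimality of `x⋆` puts `h` in the descent cone `‖x♮ + h‖♯ ≤ ‖x♮‖♯`, and
the CS-space splitting `h = v₁ + v₂` around `a` turns this into
`‖h‖♯ ≤ 2‖x♮ - a‖♯ + 2L‖h‖₂`. If `‖Φh‖_p < α‖h‖₂`, robust width gives `‖h‖₂ ≤ ρ‖h‖♯`, and
`ρL ≤ 1/4` absorbs the `‖h‖₂` term, leaving `‖h‖₂ ≤ 4ρ‖x♮ - a‖♯`. Otherwise
`α‖h‖₂ ≤ ‖Φh‖_p ≤ 2ε`, since both `x⋆` and `x♮` are feasible.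
-/

open Finset

/-- The ℓp norm of a vector in ℝ^m, for real `p`. -/
noncomputable def lpNorm {m : ℕ} (p : ℝ) (u : Fin m → ℝ) : ℝ :=
  (∑ i, |u i| ^ p) ^ (1 / p)

section LpNorm

variable {m : ℕ} {p : ℝ}

lemma lpNorm_nonneg (p : ℝ) (u : Fin m → ℝ) : 0 ≤ lpNorm p u :=
  Real.rpow_nonneg (sum_nonneg fun i _ => Real.rpow_nonneg (abs_nonneg (u i)) p) _

lemma lpNorm_neg (p : ℝ) (u : Fin m → ℝ) : lpNorm p (-u) = lpNorm p u := by
  simp [lpNorm]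

lemma lpNorm_add_le (hp : 1 ≤ p) (u v : Fin m → ℝ) :
    lpNorm p (u + v) ≤ lpNorm p u + lpNorm p v := by
  simpa [lpNorm] using Real.Lp_add_le univ u v hp

lemma lpNorm_sub_le_two_mul_of_le {ε : ℝ} (hp : 1 ≤ p) {u v e : Fin m → ℝ}
    (hu : lpNorm p (u - (v + e)) ≤ ε) (he : lpNorm p e ≤ ε) : lpNorm p (u - v) ≤ 2 * ε := by
  have hsplit : u - v = u - (v + e) + e := by abel
  rw [hsplit]
  linarith [lpNorm_add_le hp (u - (v + e)) e]

end LpNorm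

def IsCSSpace {H : Type*} [SeminormedAddCommGroup H] (s : H → ℝ) (A : Set H) (L : ℝ) : Prop :=
  ∀ a ∈ A, ∀ v : H, ∃ v₁ v₂ : H, v = v₁ + v₂ ∧ s (a + v₁) = s a + s v₁ ∧ s v₂ ≤ L * ‖v‖

def HasRobustWidth {H : Type*} [SeminormedAddCommGroup H] [Module ℝ H] {m : ℕ}
    (Φ : H →ₗ[ℝ] (Fin m → ℝ)) (p ρ α : ℝ) (s : H → ℝ) : Prop :=
  ∀ x : H, lpNorm p (Φ x) < α * ‖x‖ → ‖x‖ ≤ ρ * s x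

lemma Seminorm.le_of_map_add_le_of_decomposition {𝕜 E : Type*} [SeminormedRing 𝕜]
    [AddCommGroup E] [SMul 𝕜 E] (s : Seminorm 𝕜 E) {x a h v₁ v₂ : E}
    (hdescent : s (x + h) ≤ s x) (hsplit : h = v₁ + v₂) (hadd : s (a + v₁) = s a + s v₁) :
    s h ≤ 2 * s (x - a) + 2 * s v₂ := by
  have hv₁ : s (a + v₁) ≤ s (x + h) + s (x - a) + s v₂ := by
    have : a + v₁ = x + h - (x - a) - v₂ := by rw [hsplit]; abel
    rw [this]
    linarith [map_sub_le_add s (x + h - (x - a)) v₂, map_sub_le_add s (x + h) (x - a)]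
  have hx : s x ≤ s a + s (x - a) := by
    simpa using map_add_le_add s a (x - a)
  rw [hsplit]
  linarith [map_add_le_add s v₁ v₂]

lemma IsCSSpace.le_of_map_add_le {E : Type*} [SeminormedAddCommGroup E] [Module ℝ E]
    {s : Seminorm ℝ E} {A : Set E} {L : ℝ} (hcs : IsCSSpace s A L) {a : E} (ha : a ∈ A)
    {x h : E} (hdescent : s (x + h) ≤ s x) :
    s h ≤ 2 * s (x - a) + 2 * L * ‖h‖ := by
  obtain ⟨v₁, v₂, hsplit, hadd, hv₂⟩ := hcs a ha h
  linarith [s.le_of_map_add_le_of_decomposition hdescent hsplit hadd]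

lemma HasRobustWidth.norm_le_of_map_add_le {E : Type*} [SeminormedAddCommGroup E]
    [Module ℝ E] {m : ℕ} {Φ : E →ₗ[ℝ] (Fin m → ℝ)} {p ρ α L : ℝ} {s : Seminorm ℝ E}
    {A : Set E} (hrw : HasRobustWidth Φ p ρ α s) (hcs : IsCSSpace s A L) (hρ : 0 ≤ ρ)
    (hα : 0 < α) (hρL : 4 * ρ * L ≤ 1) {a : E} (ha : a ∈ A) {x h : E}
    (hdescent : s (x + h) ≤ s x) :
    ‖h‖ ≤ 4 * ρ * s (x - a) + lpNorm p (Φ h) / α := by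
  have hsa : 0 ≤ 4 * ρ * s (x - a) := mul_nonneg (by positivity) (apply_nonneg s _)
  by_cases hwide : lpNorm p (Φ h) < α * ‖h‖
  · have hcone := hcs.le_of_map_add_le ha hdescent
    have hh : ‖h‖ ≤ ρ * (2 * s (x - a) + 2 * L * ‖h‖) :=
      (hrw h hwide).trans (mul_le_mul_of_nonneg_left hcone hρ)
    have : 0 ≤ lpNorm p (Φ h) / α := div_nonneg (lpNorm_nonneg p _) hα.le
    nlinarith [norm_nonneg h]
  · have : ‖h‖ ≤ lpNorm p (Φ h) / α := by
      rw [le_div_iff₀ hα]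
      linarith
    linarith

theorem rwp_implies_stable_robust_recovery_general
    {H : Type*} [NormedAddCommGroup H] [InnerProductSpace ℝ H]
    (A : Set H) (sharp : H → ℝ) (L : ℝ)
    -- sharp is a norm
    (sharp_hom : ∀ (c : ℝ) (x : H), sharp (c • x) = |c| * sharp x)
    (sharp_tri : ∀ x y, sharp (x + y) ≤ sharp x + sharp y)
    -- CS space axioms
    (hdecomp : ∀ a ∈ A, ∀ v : H, ∃ v₁ v₂ : H, v = v₁ + v₂ ∧
      sharp (a + v₁) = sharp a + sharp v₁ ∧ sharp v₂ ≤ L * ‖v‖)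
    (p : ℝ) (hp : 1 ≤ p) {m : ℕ} (Φ : H →ₗ[ℝ] (Fin m → ℝ))
    (ρ α : ℝ) (hρ : 0 < ρ) (hα : 0 < α) (hρL : ρ ≤ 1 / (4 * L))
    -- (p, ρ, α)-robust width property over the sharp unit ball
    (hRWP : ∀ x : H, lpNorm p (Φ x) < α * ‖x‖ → ‖x‖ ≤ ρ * sharp x) :
    ∀ (xnat : H) (ε : ℝ), 0 ≤ ε → ∀ e : Fin m → ℝ, lpNorm p e ≤ ε →
      ∀ xstar : H,
        lpNorm p (Φ xstar - (Φ xnat + e)) ≤ ε →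
        (∀ x : H, lpNorm p (Φ x - (Φ xnat + e)) ≤ ε → sharp xstar ≤ sharp x) →
        ∀ a ∈ A, ‖xstar - xnat‖ ≤ 4 * ρ * sharp (xnat - a) + (2 / α) * ε := by
  intro xnat ε _ e he xstar hfeas hmin a ha
  let s : Seminorm ℝ H := Seminorm.of sharp sharp_tri fun c x => by
    rw [sharp_hom, Real.norm_eq_abs]
  have hρL' : 4 * ρ * L ≤ 1 := by
    have h4L : 0 < 4 * L := one_div_pos.mp (hρ.trans_le hρL)
    rw [le_div_iff₀ h4L] at hρL
    linarith
  have hdescent : s (xnat + (xstar - xnat)) ≤ s xnat := by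
    rw [add_sub_cancel]
    exact hmin xnat (by rwa [sub_add_cancel_left, lpNorm_neg])
  have hbound := HasRobustWidth.norm_le_of_map_add_le (s := s) hRWP hdecomp hρ.le hα hρL' ha
    hdescent
  have htube : lpNorm p (Φ (xstar - xnat)) ≤ 2 * ε := by
    rw [map_sub]
    exact lpNorm_sub_le_two_mul_of_le hp hfeas he
  calc ‖xstar - xnat‖ ≤ 4 * ρ * sharp (xnat - a) + lpNorm p (Φ (xstar - xnat)) / α := hbound
    _ ≤ 4 * ρ * sharp (xnat - a) + (2 / α) * ε := by
      rw [div_mul_eq_mul_div]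
      gcongr

/-- Theorem 1, (a) ⇒ (b): robust width property implies stable and robust recovery
for ℓp-constrained compressive sensing. -/
theorem rwp_implies_stable_robust_recovery
    {H : Type*} [NormedAddCommGroup H] [InnerProductSpace ℝ H] [FiniteDimensional ℝ H]
    (A : Set H) (sharp : H → ℝ) (L : ℝ) (hL : 0 < L)
    -- sharp is a norm
    (sharp_nonneg : ∀ x, 0 ≤ sharp x)
    (sharp_def : ∀ x, sharp x = 0 → x = 0)
    (sharp_hom : ∀ (c : ℝ) (x : H), sharp (c • x) = |c| * sharp x)
    (sharp_tri : ∀ x y, sharp (x + y) ≤ sharp x + sharp y)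
    -- CS space axioms
    (hA0 : (0 : H) ∈ A)
    (hdecomp : ∀ a ∈ A, ∀ v : H, ∃ v₁ v₂ : H, v = v₁ + v₂ ∧
      sharp (a + v₁) = sharp a + sharp v₁ ∧ sharp v₂ ≤ L * ‖v‖)
    (p : ℝ) (hp : 1 ≤ p) {m : ℕ} (Φ : H →ₗ[ℝ] (Fin m → ℝ))
    (ρ α : ℝ) (hρ : 0 < ρ) (hα : 0 < α) (hρL : ρ ≤ 1 / (4 * L))
    -- (p, ρ, α)-robust width property over the sharp unit ball
    (hRWP : ∀ x : H, lpNorm p (Φ x) < α * ‖x‖ → ‖x‖ ≤ ρ * sharp x) :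
    ∀ (xnat : H) (ε : ℝ), 0 ≤ ε → ∀ e : Fin m → ℝ, lpNorm p e ≤ ε →
      ∀ xstar : H,
        lpNorm p (Φ xstar - (Φ xnat + e)) ≤ ε →
        (∀ x : H, lpNorm p (Φ x - (Φ xnat + e)) ≤ ε → sharp xstar ≤ sharp x) →
        ∀ a ∈ A, ‖xstar - xnat‖ ≤ 4 * ρ * sharp (xnat - a) + (2 / α) * ε :=
  rwp_implies_stable_robust_recovery_general A sharp L sharp_hom sharp_tri hdecomp p hp Φ ρ α hρ hα
    hρL hRWP
end

section
/- Let (H, A, ‖·‖♯) be a CS space with bound L > 0 and let x⋆, x♮ ∈ H satisfy ‖x⋆‖♯ ≤ ‖x♮‖♯. Then for every a ∈ A, ‖x⋆ − x♮‖♯ ≤ 2‖x♮ − a‖♯ + 2L‖x⋆ − x♮‖₂. -/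
/-!
Split `x⋆ - x♮ = v₁ + v₂` at `a`. Since `‖·‖♯` is additive along `a + v₁`, the triangle inequality
through `a + v₁ = x⋆ + (a - x♮) - v₂` together with `‖x⋆‖♯ ≤ ‖x♮‖♯ ≤ ‖a‖♯ + ‖x♮ - a‖♯` gives
`‖v₁‖♯ ≤ 2‖x♮ - a‖♯ + ‖v₂‖♯`, and `‖v₂‖♯ ≤ L‖x⋆ - x♮‖₂` by the CS property.
-/

section AddGroupSeminormClass

variable {F E : Type*} [AddCommGroup E] [FunLike F E ℝ] [AddGroupSeminormClass F E ℝ]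

theorem map_le_two_mul_add_of_map_add_eq_add {p : F} {x y a v₁ v₂ : E} (hxy : p x ≤ p y)
    (hv : x - y = v₁ + v₂) (hadd : p (a + v₁) = p a + p v₁) :
    p v₁ ≤ 2 * p (y - a) + p v₂ := by
  have hav₁ : a + v₁ = x + ((a - y) + -v₂) := by
    rw [eq_sub_of_add_eq hv.symm]; abel
  have hav₁_le : p (a + v₁) ≤ p x + (p (y - a) + p v₂) :=
    calc p (a + v₁) ≤ p x + p ((a - y) + -v₂) := hav₁ ▸ map_add_le_add p _ _
      _ ≤ p x + (p (a - y) + p (-v₂)) := add_le_add_right (map_add_le_add p _ _) _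
      _ = p x + (p (y - a) + p v₂) := by rw [map_sub_rev, map_neg_eq_map]
  have hy : p y ≤ p a + p (y - a) := by
    simpa using map_add_le_add p a (y - a)
  linarith

theorem map_sub_le_two_mul_add_of_map_add_eq_add {p : F} {x y a v₁ v₂ : E} (hxy : p x ≤ p y)
    (hv : x - y = v₁ + v₂) (hadd : p (a + v₁) = p a + p v₁) :
    p (x - y) ≤ 2 * p (y - a) + 2 * p v₂ := by
  have hv₁ := map_le_two_mul_add_of_map_add_eq_add hxy hv hadd
  have hxy_le : p (x - y) ≤ p v₁ + p v₂ := hv ▸ map_add_le_add p v₁ v₂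
  linarith

end AddGroupSeminormClass

theorem cs_space_sharp_bound_general
    {H : Type*} [NormedAddCommGroup H] [InnerProductSpace ℝ H]
    (A : Set H) (sharp : H → ℝ) (L : ℝ)
    -- sharp is a norm
    (sharp_hom : ∀ (c : ℝ) (x : H), sharp (c • x) = |c| * sharp x)
    (sharp_tri : ∀ x y, sharp (x + y) ≤ sharp x + sharp y)
    -- CS space axioms
    (hdecomp : ∀ a ∈ A, ∀ v : H, ∃ v₁ v₂ : H, v = v₁ + v₂ ∧
      sharp (a + v₁) = sharp a + sharp v₁ ∧ sharp v₂ ≤ L * ‖v‖)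
    (xstar xnat : H) (hmin : sharp xstar ≤ sharp xnat) :
    ∀ a ∈ A, sharp (xstar - xnat) ≤ 2 * sharp (xnat - a) + 2 * L * ‖xstar - xnat‖ := by
  intro a ha
  let p : Seminorm ℝ H := Seminorm.of sharp sharp_tri sharp_hom
  obtain ⟨v₁, v₂, hv, hadd, hv₂⟩ := hdecomp a ha (xstar - xnat)
  have key : p (xstar - xnat) ≤ 2 * p (xnat - a) + 2 * p v₂ :=
    map_sub_le_two_mul_add_of_map_add_eq_add (p := p) hmin hv hadd
  change sharp (xstar - xnat) ≤ 2 * sharp (xnat - a) + 2 * sharp v₂ at key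
  linarith

/-- Inequality (5) in the paper: in a CS space with bound L, if ‖x⋆‖♯ ≤ ‖x♮‖♯ then
‖x⋆ − x♮‖♯ ≤ 2‖x♮ − a‖♯ + 2L‖x⋆ − x♮‖₂ for every a ∈ A. -/
theorem cs_space_sharp_bound
    {H : Type*} [NormedAddCommGroup H] [InnerProductSpace ℝ H] [FiniteDimensional ℝ H]
    (A : Set H) (sharp : H → ℝ) (L : ℝ) (hL : 0 < L)
    -- sharp is a norm
    (sharp_nonneg : ∀ x, 0 ≤ sharp x)
    (sharp_def : ∀ x, sharp x = 0 → x = 0)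
    (sharp_hom : ∀ (c : ℝ) (x : H), sharp (c • x) = |c| * sharp x)
    (sharp_tri : ∀ x y, sharp (x + y) ≤ sharp x + sharp y)
    -- CS space axioms
    (hA0 : (0 : H) ∈ A)
    (hdecomp : ∀ a ∈ A, ∀ v : H, ∃ v₁ v₂ : H, v = v₁ + v₂ ∧
      sharp (a + v₁) = sharp a + sharp v₁ ∧ sharp v₂ ≤ L * ‖v‖)
    (xstar xnat : H) (hmin : sharp xstar ≤ sharp xnat) :
    ∀ a ∈ A, sharp (xstar - xnat) ≤ 2 * sharp (xnat - a) + 2 * L * ‖xstar - xnat‖ :=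
  cs_space_sharp_bound_general A sharp L sharp_hom sharp_tri hdecomp xstar xnat hmin
end

section
/- Let (H, A, ‖·‖♯) be a CS space with bound L > 0, let 1 ≤ p < ∞, and let Φ : H → ℝ^m be a linear map satisfying the robust null space property with respect to ℓp with constants φ > 0 and τ > 0, i.e., ‖v‖₂ ≤ φ‖v − a‖♯ + τ‖Φv‖_{ℓp} for all v ∈ H and all a ∈ A. Then Φ satisfies the (p, 2φ, 1/(2τ))-robust width property over B♯. -/
open Finset

theorem robust_nsp_implies_rwp_general
    {H : Type*} [NormedAddCommGroup H] [InnerProductSpace ℝ H]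
    (A : Set H) (sharp : H → ℝ)
    -- CS space axioms
    (hA0 : (0 : H) ∈ A)
    (p : ℝ) {m : ℕ} (Φ : H →ₗ[ℝ] (Fin m → ℝ))
    (φ τ : ℝ) (hτ : 0 < τ)
    -- robust null space property with respect to ℓp
    (hNSP : ∀ v : H, ∀ a ∈ A, ‖v‖ ≤ φ * sharp (v - a) + τ * lpNorm p (Φ v)) :
    -- conclusion: (p, 2φ, 1/(2τ))-robust width property over B♯
    ∀ x : H, lpNorm p (Φ x) < (1 / (2 * τ)) * ‖x‖ → ‖x‖ ≤ 2 * φ * sharp x := by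
  intro x hx
  have hnsp : ‖x‖ ≤ φ * sharp x + τ * lpNorm p (Φ x) := by simpa using hNSP x 0 hA0
  have hsmall : τ * lpNorm p (Φ x) < ‖x‖ / 2 :=
    calc τ * lpNorm p (Φ x) < τ * (1 / (2 * τ) * ‖x‖) := by gcongr
      _ = ‖x‖ / 2 := by field_simp
  linarith

/-- Theorem 2: the robust null space property with respect to ℓp with constants φ, τ
implies the (p, 2φ, 1/(2τ))-robust width property over the sharp unit ball. -/
theorem robust_nsp_implies_rwp
    {H : Type*} [NormedAddCommGroup H] [InnerProductSpace ℝ H] [FiniteDimensional ℝ H]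
    (A : Set H) (sharp : H → ℝ) (L : ℝ) (hL : 0 < L)
    -- sharp is a norm
    (sharp_nonneg : ∀ x, 0 ≤ sharp x)
    (sharp_def : ∀ x, sharp x = 0 → x = 0)
    (sharp_hom : ∀ (c : ℝ) (x : H), sharp (c • x) = |c| * sharp x)
    (sharp_tri : ∀ x y, sharp (x + y) ≤ sharp x + sharp y)
    -- CS space axioms
    (hA0 : (0 : H) ∈ A)
    (hdecomp : ∀ a ∈ A, ∀ v : H, ∃ v₁ v₂ : H, v = v₁ + v₂ ∧
      sharp (a + v₁) = sharp a + sharp v₁ ∧ sharp v₂ ≤ L * ‖v‖)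
    (p : ℝ) (hp : 1 ≤ p) {m : ℕ} (Φ : H →ₗ[ℝ] (Fin m → ℝ))
    (φ τ : ℝ) (hφ : 0 < φ) (hτ : 0 < τ)
    -- robust null space property with respect to ℓp
    (hNSP : ∀ v : H, ∀ a ∈ A, ‖v‖ ≤ φ * sharp (v - a) + τ * lpNorm p (Φ v)) :
    -- conclusion: (p, 2φ, 1/(2τ))-robust width property over B♯
    ∀ x : H, lpNorm p (Φ x) < (1 / (2 * τ)) * ‖x‖ → ‖x‖ ≤ 2 * φ * sharp x :=
  robust_nsp_implies_rwp_general A sharp hA0 p Φ φ τ hτ hNSP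
end

section
/- Let Φ : ℂ^N → ℂ^m be a linear map, let s be a positive integer with s ≤ N, let 1 ≤ p < ∞, and let ψ, τ > 0 with ψ < 1. Suppose Φ satisfies the traditional robust null space property with respect to ℓp of order s: for every set S ⊆ {1,…,N} with |S| ≤ s and every v ∈ ℂ^N, ‖v_S‖_{ℓ2} ≤ (ψ/√s)‖v_{S^c}‖_{ℓ1} + τ‖Φv‖_{ℓp}, where v_S denotes the vector that agrees with v on S and is zero outside S. Then for every v ∈ ℂ^N and every a ∈ ℂ^N with at most s nonzero entries, ‖v‖_{ℓ2} ≤ (ψ/√s + 1)‖v − a‖_{ℓ1} + τ‖Φv‖_{ℓp}. -/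
open Finset

/-- The ℓp norm of a vector in ℂ^m, for real `p`. -/
noncomputable def lpNormC {m : ℕ} (p : ℝ) (u : Fin m → ℂ) : ℝ :=
  (∑ i, ‖u i‖ ^ p) ^ (1 / p)

/-- The ℓ1 norm of a vector in ℂ^N. -/
noncomputable def l1NormC {N : ℕ} (v : Fin N → ℂ) : ℝ :=
  ∑ j, ‖v j‖

/-- The ℓ2 norm of a vector in ℂ^N. -/
noncomputable def l2NormC {N : ℕ} (v : Fin N → ℂ) : ℝ :=
  Real.sqrt (∑ j, ‖v j‖ ^ 2)

/-- The restriction of a vector to a set of coordinates (zero outside the set). -/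
noncomputable def restrictC {N : ℕ} (S : Finset (Fin N)) (v : Fin N → ℂ) : Fin N → ℂ :=
  fun j => if j ∈ S then v j else 0

/-!
Split `v` along the support `S` of `a`. The ℓ2 triangle inequality bounds `‖v‖₂` by
`‖v_S‖₂ + ‖v_{Sᶜ}‖₂`; the null space property bounds the first term, `‖·‖₂ ≤ ‖·‖₁` the second,
and since `a` vanishes off `S`, `‖v_{Sᶜ}‖₁ = ‖(v - a)_{Sᶜ}‖₁ ≤ ‖v - a‖₁`.
-/

section

variable {N : ℕ}

lemma l2NormC_eq_norm_toLp (v : Fin N → ℂ) :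
    l2NormC v = ‖(WithLp.toLp 2 v : EuclideanSpace ℂ (Fin N))‖ := by
  rw [EuclideanSpace.norm_eq]
  rfl

lemma l2NormC_add_le (u w : Fin N → ℂ) : l2NormC (u + w) ≤ l2NormC u + l2NormC w := by
  simp only [l2NormC_eq_norm_toLp, WithLp.toLp_add]
  exact norm_add_le _ _

lemma l2NormC_le_l1NormC (v : Fin N → ℂ) : l2NormC v ≤ l1NormC v :=
  Real.sqrt_le_iff.mpr
    ⟨sum_nonneg fun _ _ ↦ norm_nonneg _, sum_sq_le_sq_sum_of_nonneg fun _ _ ↦ norm_nonneg _⟩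

lemma restrictC_add_restrictC_compl (S : Finset (Fin N)) (v : Fin N → ℂ) :
    restrictC S v + restrictC Sᶜ v = v := by
  ext j
  by_cases hj : j ∈ S <;> simp [restrictC, hj]

lemma l1NormC_restrictC_le (S : Finset (Fin N)) (v : Fin N → ℂ) :
    l1NormC (restrictC S v) ≤ l1NormC v :=
  sum_le_sum fun j _ ↦ by
    unfold restrictC
    split_ifs <;> simp

lemma restrictC_sub_of_forall_mem_eq_zero {S : Finset (Fin N)} {a : Fin N → ℂ}
    (ha : ∀ j ∈ S, a j = 0) (v : Fin N → ℂ) : restrictC S (v - a) = restrictC S v := by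
  ext j
  by_cases hj : j ∈ S <;> simp [restrictC, hj, ha]

end

theorem traditional_nsp_implies_general_nsp_general
    {N m : ℕ} (Φ : (Fin N → ℂ) →ₗ[ℂ] (Fin m → ℂ))
    (s : ℕ)
    (p : ℝ)
    (ψ τ : ℝ) (hψ : 0 < ψ)
    (hNSP : ∀ (S : Finset (Fin N)), S.card ≤ s → ∀ v : Fin N → ℂ,
      l2NormC (restrictC S v) ≤
        (ψ / Real.sqrt s) * l1NormC (restrictC Sᶜ v) + τ * lpNormC p (Φ v)) :
    ∀ (v a : Fin N → ℂ), {j | a j ≠ 0}.ncard ≤ s →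
      l2NormC v ≤ (ψ / Real.sqrt s + 1) * l1NormC (v - a) + τ * lpNormC p (Φ v) := by
  intro v a ha
  set S : Finset (Fin N) := univ.filter (a · ≠ 0)
  have hS : S.card ≤ s := by
    rwa [← Set.ncard_coe_finset, coe_filter_univ]
  have htail : l1NormC (restrictC Sᶜ v) ≤ l1NormC (v - a) := by
    have hvanish : ∀ j ∈ Sᶜ, a j = 0 := by simp [S]
    rw [← restrictC_sub_of_forall_mem_eq_zero hvanish v]
    exact l1NormC_restrictC_le _ _
  calc l2NormC v = l2NormC (restrictC S v + restrictC Sᶜ v) := by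
        rw [restrictC_add_restrictC_compl]
    _ ≤ l2NormC (restrictC S v) + l2NormC (restrictC Sᶜ v) := l2NormC_add_le _ _
    _ ≤ (ψ / Real.sqrt s * l1NormC (restrictC Sᶜ v) + τ * lpNormC p (Φ v))
          + l1NormC (restrictC Sᶜ v) := add_le_add (hNSP S hS v) (l2NormC_le_l1NormC _)
    _ = (ψ / Real.sqrt s + 1) * l1NormC (restrictC Sᶜ v) + τ * lpNormC p (Φ v) := by ring
    _ ≤ (ψ / Real.sqrt s + 1) * l1NormC (v - a) + τ * lpNormC p (Φ v) := by gcongr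

/-- Example 1: the traditional robust null space property with respect to ℓp of order s
implies the general robust null space property of Definition 3. -/
theorem traditional_nsp_implies_general_nsp
    {N m : ℕ} (Φ : (Fin N → ℂ) →ₗ[ℂ] (Fin m → ℂ))
    (s : ℕ) (hs : 0 < s) (hsN : s ≤ N)
    (p : ℝ) (hp : 1 ≤ p)
    (ψ τ : ℝ) (hψ : 0 < ψ) (hψ1 : ψ < 1) (hτ : 0 < τ)
    (hNSP : ∀ (S : Finset (Fin N)), S.card ≤ s → ∀ v : Fin N → ℂ,
      l2NormC (restrictC S v) ≤
        (ψ / Real.sqrt s) * l1NormC (restrictC Sᶜ v) + τ * lpNormC p (Φ v)) :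
    ∀ (v a : Fin N → ℂ), {j | a j ≠ 0}.ncard ≤ s →
      l2NormC v ≤ (ψ / Real.sqrt s + 1) * l1NormC (v - a) + τ * lpNormC p (Φ v) :=
  traditional_nsp_implies_general_nsp_general Φ s p ψ τ hψ hNSP
end

section
/- Let Φ : ℝ^N → ℝ^m be a linear map, let 1 ≤ p < ∞, let s be a positive integer with s ≤ N, let μ > 0 and 0 ≤ δ < 1/3, and suppose Φ satisfies the (μ, s, δ)-RIP_{p,2}. Then Φ satisfies the (p, 3/√s, (1/3 − δ)μ)-robust width property over B_{ℓ1}; that is, ‖x‖_{ℓ2} ≤ (3/√s)‖x‖_{ℓ1} for every x ∈ ℝ^N with ‖Φx‖_{ℓp} < (1/3 − δ)μ‖x‖_{ℓ2}. -/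
/-! Sort the coordinates of `x` by decreasing modulus and cut them into consecutive blocks of
`s`. Every entry of block `k + 1` is at most the average modulus on block `k`, so the ℓ2 norms
of the tail blocks sum to at most `‖x‖₁ / √s`. The lower RIP bound on the head block and the
upper RIP bound on each tail block give `μ(1 − δ)‖x‖₂ ≤ ‖Φx‖_p + 2μ‖x‖₁ / √s`, and the
hypothesis `‖Φx‖_p < (1/3 − δ)μ‖x‖₂` turns this into `‖x‖₂ ≤ 3‖x‖₁ / √s`. -/

open Finset

/-- The ℓ1 norm of a vector in ℝ^N. -/
noncomputable def l1Norm {N : ℕ} (v : Fin N → ℝ) : ℝ :=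
  ∑ j, |v j|

/-- The ℓ2 norm of a vector in ℝ^N. -/
noncomputable def l2Norm {N : ℕ} (v : Fin N → ℝ) : ℝ :=
  Real.sqrt (∑ j, (v j) ^ 2)

section Norms

variable {m : ℕ} {p : ℝ}

lemma lpNorm_zero (hp : 1 ≤ p) : lpNorm p (0 : Fin m → ℝ) = 0 := by
  have hp0 : p ≠ 0 := by linarith
  simp [lpNorm, Real.zero_rpow hp0, Real.zero_rpow (inv_ne_zero hp0)]

lemma lpNorm_le_lpNorm_add_add (hp : 1 ≤ p) (u v : Fin m → ℝ) :
    lpNorm p u ≤ lpNorm p (u + v) + lpNorm p v := by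
  simpa [lpNorm_neg] using lpNorm_add_le hp (u + v) (-v)

lemma lpNorm_sum_le (hp : 1 ≤ p) {ι : Type*} (t : Finset ι) (f : ι → Fin m → ℝ) :
    lpNorm p (∑ k ∈ t, f k) ≤ ∑ k ∈ t, lpNorm p (f k) := by
  induction t using Finset.cons_induction with
  | empty => simp [lpNorm_zero hp]
  | cons a t _ ih =>
    rw [sum_cons, sum_cons]
    exact (lpNorm_add_le hp _ _).trans (by linarith)

lemma l2Norm_eq_lpNorm_two (v : Fin m → ℝ) : l2Norm v = lpNorm 2 v := by
  simp [l2Norm, lpNorm, Real.sqrt_eq_rpow]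

lemma l2Norm_add_le (u v : Fin m → ℝ) : l2Norm (u + v) ≤ l2Norm u + l2Norm v := by
  simpa only [l2Norm_eq_lpNorm_two] using lpNorm_add_le one_le_two u v

lemma l2Norm_sum_le {ι : Type*} (t : Finset ι) (f : ι → Fin m → ℝ) :
    l2Norm (∑ k ∈ t, f k) ≤ ∑ k ∈ t, l2Norm (f k) := by
  simpa only [l2Norm_eq_lpNorm_two] using lpNorm_sum_le one_le_two t f

lemma l2Norm_le_sqrt_card_mul {v : Fin m → ℝ} {c : ℝ} (t : Finset (Fin m))
    (hv : ∀ i ∉ t, v i = 0) (hc : ∀ i ∈ t, |v i| ≤ c) (hc0 : 0 ≤ c) :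
    l2Norm v ≤ Real.sqrt #t * c := by
  have hsq : ∑ i, v i ^ 2 ≤ #t * c ^ 2 := calc
    ∑ i, v i ^ 2 = ∑ i ∈ t, v i ^ 2 :=
      (sum_subset (subset_univ t) fun i _ hi => by simp [hv i hi]).symm
    _ ≤ ∑ _i ∈ t, c ^ 2 := sum_le_sum fun i hi =>
      (sq_abs (v i)).symm.trans_le (pow_le_pow_left₀ (abs_nonneg _) (hc i hi) 2)
    _ = #t * c ^ 2 := by rw [sum_const, nsmul_eq_mul]
  calc l2Norm v ≤ Real.sqrt (#t * c ^ 2) := Real.sqrt_le_sqrt hsq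
    _ = Real.sqrt #t * c := by rw [Real.sqrt_mul (Nat.cast_nonneg _), Real.sqrt_sq hc0]

lemma l1Norm_comp_perm (v : Fin m → ℝ) (σ : Equiv.Perm (Fin m)) : l1Norm (v ∘ σ) = l1Norm v :=
  Equiv.sum_comp σ fun j => |v j|

lemma l2Norm_comp_perm (v : Fin m → ℝ) (σ : Equiv.Perm (Fin m)) : l2Norm (v ∘ σ) = l2Norm v :=
  congrArg Real.sqrt (Equiv.sum_comp σ fun j => v j ^ 2)

lemma ncard_support_comp_perm (v : Fin m → ℝ) (σ : Equiv.Perm (Fin m)) :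
    {j | (v ∘ σ) j ≠ 0}.ncard = {j | v j ≠ 0}.ncard :=
  Set.ncard_preimage_of_injective_subset_range (s := {j | v j ≠ 0}) σ.injective (by simp)

end Norms

section Blocks

variable {N s : ℕ}

def blockIndices (N s k : ℕ) : Finset (Fin N) :=
  {i | (i : ℕ) / s = k}

@[simp]
lemma mem_blockIndices {k : ℕ} {i : Fin N} : i ∈ blockIndices N s k ↔ (i : ℕ) / s = k := by
  simp [blockIndices]

def block (s k : ℕ) (y : Fin N → ℝ) : Fin N → ℝ :=
  fun i => if (i : ℕ) / s = k then y i else 0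

lemma Fin.val_div_lt_succ (s : ℕ) (i : Fin N) : (i : ℕ) / s < N + 1 :=
  (Nat.div_le_self _ _).trans_lt (Nat.lt_succ_of_lt i.isLt)

lemma sum_range_block_apply (y : Fin N → ℝ) (i : Fin N) :
    ∑ k ∈ range (N + 1), block s k y i = y i := by
  simp only [block]
  rw [sum_ite_eq, if_pos (mem_range.mpr (Fin.val_div_lt_succ s i))]

lemma l1Norm_block (k : ℕ) (y : Fin N → ℝ) :
    l1Norm (block s k y) = ∑ i ∈ blockIndices N s k, |y i| := by
  rw [l1Norm, blockIndices, sum_filter]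
  exact sum_congr rfl fun i _ => by simp only [block]; split_ifs <;> simp

lemma sum_range_l1Norm_block (y : Fin N → ℝ) :
    ∑ k ∈ range (N + 1), l1Norm (block s k y) = l1Norm y := by
  simp only [l1Norm_block, blockIndices]
  exact sum_fiberwise_of_maps_to (fun i _ => mem_range.mpr (Fin.val_div_lt_succ s i)) _

lemma map_valEmbedding_blockIndices (hs : 0 < s) (k : ℕ) :
    (blockIndices N s k).map Fin.valEmbedding = Ico (k * s) (min N (k * s + s)) := by
  ext n
  simp [Nat.div_eq_iff hs, Fin.exists_iff]
  omega

lemma card_blockIndices_le (hs : 0 < s) (k : ℕ) : #(blockIndices N s k) ≤ s := by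
  rw [← card_map, map_valEmbedding_blockIndices hs, Nat.card_Ico]
  omega

lemma card_blockIndices_of_le (hs : 0 < s) {k : ℕ} (hk : k * s + s ≤ N) :
    #(blockIndices N s k) = s := by
  rw [← card_map, map_valEmbedding_blockIndices hs, Nat.card_Ico]
  omega

lemma ncard_support_block_le (hs : 0 < s) (k : ℕ) (y : Fin N → ℝ) :
    {i | block s k y i ≠ 0}.ncard ≤ s := by
  refine le_trans (Set.ncard_le_ncard (t := ↑(blockIndices N s k)) (fun i hi => ?_)
    (Set.toFinite _)) ?_
  · by_contra h
    simp_all [block]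
  · rw [Set.ncard_coe_finset]
    exact card_blockIndices_le hs k

variable {y : Fin N → ℝ}

lemma abs_le_l1Norm_block_div (hs : 0 < s) (hy : Antitone fun i => |y i|) {k : ℕ} {i : Fin N}
    (hi : (i : ℕ) / s = k + 1) : |y i| ≤ l1Norm (block s k y) / s := by
  have hcard : #(blockIndices N s k) = s := by
    refine card_blockIndices_of_le hs ?_
    have := (Nat.div_eq_iff hs).mp hi
    rw [add_one_mul] at this
    omega
  have hge : ∀ j ∈ blockIndices N s k, |y i| ≤ |y j| := by
    intro j hj
    refine hy (not_lt.mp fun hij => ?_)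
    have := Nat.div_le_div_right (c := s) (Fin.le_def.mp hij.le)
    rw [mem_blockIndices] at hj
    omega
  rw [le_div_iff₀ (by exact_mod_cast hs), l1Norm_block, mul_comm]
  simpa [hcard] using card_nsmul_le_sum _ _ _ hge

lemma l2Norm_block_succ_le (hs : 0 < s) (hy : Antitone fun i => |y i|) (k : ℕ) :
    l2Norm (block s (k + 1) y) ≤ l1Norm (block s k y) / Real.sqrt s := by
  have hs' : (0 : ℝ) < s := by exact_mod_cast hs
  have hL : 0 ≤ l1Norm (block s k y) / s :=
    div_nonneg (sum_nonneg fun _ _ => abs_nonneg _) hs'.le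
  calc l2Norm (block s (k + 1) y)
      ≤ Real.sqrt #(blockIndices N s (k + 1)) * (l1Norm (block s k y) / s) := by
        refine l2Norm_le_sqrt_card_mul _ (fun i hi => ?_) (fun i hi => ?_) hL
        · simp_all [block]
        · rw [mem_blockIndices] at hi
          simpa [block, hi] using abs_le_l1Norm_block_div hs hy hi
    _ ≤ Real.sqrt s * (l1Norm (block s k y) / s) := by
        gcongr
        exact_mod_cast card_blockIndices_le hs _
    _ = l1Norm (block s k y) / Real.sqrt s := by
        field_simp
        rw [Real.sq_sqrt hs'.le, mul_comm]

end Blocks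

theorem exists_sparse_decomposition {N s : ℕ} (hs : 0 < s) (x : Fin N → ℝ) :
    ∃ z : ℕ → Fin N → ℝ, (∀ k, {j | z k j ≠ 0}.ncard ≤ s) ∧
      x = z 0 + ∑ k ∈ range N, z (k + 1) ∧
      ∑ k ∈ range N, l2Norm (z (k + 1)) ≤ l1Norm x / Real.sqrt s := by
  set σ := Tuple.sort fun i => -|x i|
  have hy : Antitone fun i => |(x ∘ σ) i| := fun i j hij =>
    neg_le_neg_iff.mp (Tuple.monotone_sort (fun i => -|x i|) hij)
  refine ⟨fun k => block s k (x ∘ σ) ∘ σ.symm, fun k => ?_, ?_, ?_⟩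
  · rw [ncard_support_comp_perm]
    exact ncard_support_block_le hs k _
  · funext j
    have := sum_range_block_apply (s := s) (x ∘ σ) (σ.symm j)
    rw [sum_range_succ', Function.comp_apply, σ.apply_symm_apply] at this
    simp [← this, add_comm, Finset.sum_apply]
  · simp only [l2Norm_comp_perm]
    calc ∑ k ∈ range N, l2Norm (block s (k + 1) (x ∘ σ))
        ≤ ∑ k ∈ range N, l1Norm (block s k (x ∘ σ)) / Real.sqrt s :=
          sum_le_sum fun k _ => l2Norm_block_succ_le hs hy k
      _ ≤ ∑ k ∈ range (N + 1), l1Norm (block s k (x ∘ σ)) / Real.sqrt s :=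
          sum_le_sum_of_subset_of_nonneg (range_subset_range.mpr N.le_succ) fun _ _ _ =>
            div_nonneg (sum_nonneg fun _ _ => abs_nonneg _) (Real.sqrt_nonneg _)
      _ = l1Norm x / Real.sqrt s := by
          rw [← sum_div, sum_range_l1Norm_block, l1Norm_comp_perm]

theorem rip_implies_rwp_general
    {N m : ℕ} (Φ : (Fin N → ℝ) →ₗ[ℝ] (Fin m → ℝ))
    (p : ℝ) (hp : 1 ≤ p)
    (s : ℕ) (hs : 0 < s)
    (μ δ : ℝ) (hμ : 0 < μ) (hδ0 : 0 ≤ δ) (hδ : δ < 1 / 3)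
    (hRIP : ∀ z : Fin N → ℝ, {j | z j ≠ 0}.ncard ≤ s →
      μ * (1 - δ) * l2Norm z ≤ lpNorm p (Φ z) ∧ lpNorm p (Φ z) ≤ μ * (1 + δ) * l2Norm z) :
    ∀ x : Fin N → ℝ, lpNorm p (Φ x) < (1 / 3 - δ) * μ * l2Norm x →
      l2Norm x ≤ (3 / Real.sqrt s) * l1Norm x := by
  intro x hx
  obtain ⟨z, hsparse, hx_eq, htail⟩ := exists_sparse_decomposition hs x
  set tail := ∑ k ∈ range N, z (k + 1)
  have hhead : l2Norm x ≤ l2Norm (z 0) + l1Norm x / Real.sqrt s := by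
    have := l2Norm_add_le (z 0) tail
    rw [← hx_eq] at this
    linarith [l2Norm_sum_le (range N) fun k => z (k + 1)]
  have hΦtail : lpNorm p (Φ tail) ≤ μ * (1 + δ) * (l1Norm x / Real.sqrt s) := calc
    lpNorm p (Φ tail) ≤ ∑ k ∈ range N, lpNorm p (Φ (z (k + 1))) := by
      rw [map_sum]; exact lpNorm_sum_le hp _ _
    _ ≤ ∑ k ∈ range N, μ * (1 + δ) * l2Norm (z (k + 1)) :=
      sum_le_sum fun k _ => (hRIP _ (hsparse _)).2
    _ ≤ μ * (1 + δ) * (l1Norm x / Real.sqrt s) := by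
      rw [← mul_sum]; gcongr
  have hΦhead : μ * (1 - δ) * l2Norm (z 0) ≤ lpNorm p (Φ x) + lpNorm p (Φ tail) := by
    rw [hx_eq, map_add]
    exact (hRIP _ (hsparse 0)).1.trans (lpNorm_le_lpNorm_add_add hp _ _)
  have hL : 0 ≤ l1Norm x / Real.sqrt s :=
    div_nonneg (sum_nonneg fun _ _ => abs_nonneg _) (Real.sqrt_nonneg _)
  have hμδ : 0 ≤ μ * (1 - δ) := by nlinarith
  rw [div_mul_eq_mul_div, mul_div_assoc]
  nlinarith [mul_le_mul_of_nonneg_left hhead hμδ]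

/-- Theorem 3: the (μ, s, δ)-RIP_{p,2} with δ < 1/3 implies the
(p, 3/√s, (1/3 − δ)μ)-robust width property over the ℓ1 unit ball. -/
theorem rip_implies_rwp
    {N m : ℕ} (Φ : (Fin N → ℝ) →ₗ[ℝ] (Fin m → ℝ))
    (p : ℝ) (hp : 1 ≤ p)
    (s : ℕ) (hs : 0 < s) (hsN : s ≤ N)
    (μ δ : ℝ) (hμ : 0 < μ) (hδ0 : 0 ≤ δ) (hδ : δ < 1 / 3)
    (hRIP : ∀ z : Fin N → ℝ, {j | z j ≠ 0}.ncard ≤ s →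
      μ * (1 - δ) * l2Norm z ≤ lpNorm p (Φ z) ∧ lpNorm p (Φ z) ≤ μ * (1 + δ) * l2Norm z) :
    ∀ x : Fin N → ℝ, lpNorm p (Φ x) < (1 / 3 - δ) * μ * l2Norm x →
      l2Norm x ≤ (3 / Real.sqrt s) * l1Norm x :=
  rip_implies_rwp_general Φ p hp s hs μ δ hμ hδ0 hδ hRIP
end

section
/- There exists an absolute constant c > 0 such that for every pair of positive integers s ≤ N, the Gaussian width of the set √s·B_{ℓ1} ∩ S^{N−1} = {x ∈ ℝ^N : ‖x‖_{ℓ1} ≤ √s and ‖x‖_{ℓ2} = 1} satisfies w(√s·B_{ℓ1} ∩ S^{N−1}) ≤ c·√(s·log(eN/s)). -/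
open MeasureTheory ProbabilityTheory Finset

/-- The law of a standard Gaussian vector in ℝ^N (i.i.d. N(0,1) coordinates). -/
noncomputable def stdGaussianVec (N : ℕ) : Measure (Fin N → ℝ) :=
  Measure.pi fun _ => gaussianReal 0 1

/-- The Gaussian width of a set T ⊆ ℝ^N. -/
noncomputable def gaussianWidth {N : ℕ} (T : Set (Fin N → ℝ)) : ℝ :=
  ∫ g, sSup ((fun x : Fin N → ℝ => ∑ j, g j * x j) '' T) ∂(stdGaussianVec N)

/-! For `x` in the set and `S` the `s` coordinates where `|g|` is largest, Cauchy–Schwarz bounds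
the part of `⟨g, x⟩` on `S` by `(∑_S g²)^{1/2}`; off `S` every `|g j|` is at most
`(∑_S g² / s)^{1/2}` while `‖x‖₁ ≤ √s`. Hence `⟨g, x⟩ ≤ 2 √(M g)`, where `M g` is the largest sum
of `s` squared coordinates of `g`. Now `M` is a maximum of `N.choose s` chi-square variables with
`E exp (χ²_s / 4) = 2^{s/2}`, so the exponential-moment bound `E max ≤ 4 (log ∑ E exp (X / 4) + 1)`
and `N.choose s ≤ (e N / s)^s` give `E M ≤ 12 s log (e N / s)`. Finally `2 √M ≤ t + M / t` with
`t = 4 √(s log (e N / s))`. -/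

open Real

theorem Nat.choose_le_exp_mul_div_pow (n k : ℕ) : (n.choose k : ℝ) ≤ (exp 1 * n / k) ^ k := by
  rcases k.eq_zero_or_pos with rfl | hk
  · simp
  have hk' : (0 : ℝ) < k := by exact_mod_cast hk
  have hfact : ((k : ℝ) / exp 1) ^ k ≤ k.factorial := by
    have := pow_div_factorial_le_exp (k : ℝ) hk'.le k
    rw [div_le_iff₀ (by positivity), ← exp_one_pow] at this
    rwa [div_pow, div_le_iff₀ (by positivity), mul_comm]
  calc (n.choose k : ℝ) ≤ (n : ℝ) ^ k / k.factorial := Nat.choose_le_pow_div k n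
    _ ≤ (n : ℝ) ^ k / ((k : ℝ) / exp 1) ^ k := by gcongr
    _ = (exp 1 * n / k) ^ k := by rw [← div_pow]; congr 1; field_simp

theorem one_le_log_exp_mul_div {s N : ℝ} (hs : 0 < s) (hsN : s ≤ N) :
    1 ≤ log (exp 1 * N / s) := by
  calc (1 : ℝ) = log (exp 1) := (log_exp 1).symm
    _ ≤ log (exp 1 * N / s) := by
      gcongr
      rw [le_div_iff₀ hs]
      exact mul_le_mul_of_nonneg_left hsN (exp_pos 1).le

theorem log_choose_mul_sqrt_two_pow_add_one_le {s N : ℕ} (hs : 0 < s) (hsN : s ≤ N) :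
    log (N.choose s * √2 ^ s) + 1 ≤ 3 * (s * log (exp 1 * N / s)) := by
  have hs' : (1 : ℝ) ≤ s := by exact_mod_cast hs
  have hL := one_le_log_exp_mul_div (by positivity) (by exact_mod_cast hsN : (s : ℝ) ≤ N)
  have hchoose : (0 : ℝ) < N.choose s := by exact_mod_cast Nat.choose_pos hsN
  have hlog_choose : log (N.choose s) ≤ s * log (exp 1 * N / s) := by
    rw [← log_pow]
    exact log_le_log hchoose (Nat.choose_le_exp_mul_div_pow N s)
  have hlog_sqrt_two : log √2 ≤ 1 := by
    rw [log_sqrt zero_le_two]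
    linarith [log_two_lt_d9]
  rw [log_mul hchoose.ne' (by positivity), log_pow]
  nlinarith

theorem two_mul_sqrt_le_add_div {y t : ℝ} (hy : 0 ≤ y) (ht : 0 < t) : 2 * √y ≤ t + y / t := by
  rw [← sub_le_iff_le_add', le_div_iff₀ ht]
  nlinarith [sq_nonneg (√y - t), sq_sqrt hy]

section TopCoordinates

variable {ι : Type*} [Fintype ι] [DecidableEq ι]

theorem Finset.exists_card_eq_forall_notMem_le {α : Type*} [AddCommMonoid α] [LinearOrder α]
    [IsOrderedCancelAddMonoid α] (f : ι → α) {s : ℕ} (hs : s ≤ Fintype.card ι) :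
    ∃ S : Finset ι, #S = s ∧ ∀ i ∈ S, ∀ j ∉ S, f j ≤ f i := by
  have hne : (powersetCard s (univ : Finset ι)).Nonempty := powersetCard_nonempty.2 (by simpa)
  obtain ⟨S, hS, hmax⟩ := exists_max_image _ (fun S => ∑ i ∈ S, f i) hne
  rw [mem_powersetCard_univ] at hS
  refine ⟨S, hS, fun i hi j hj => ?_⟩
  have hj' : j ∉ S.erase i := fun h => hj (mem_of_mem_erase h)
  have hswap := hmax (insert j (S.erase i)) (by
    rw [mem_powersetCard_univ, card_insert_of_notMem hj', card_erase_of_mem hi, hS]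
    have : 0 < s := hS ▸ card_pos.2 ⟨i, hi⟩
    omega)
  rw [sum_insert hj', ← sum_erase_add S f hi, add_comm] at hswap
  exact le_of_add_le_add_left hswap

variable {S : Finset ι} {g x : ι → ℝ}

theorem sum_compl_mul_le_sqrt_sum_sq (hS : S.Nonempty)
    (htop : ∀ i ∈ S, ∀ j ∉ S, g j ^ 2 ≤ g i ^ 2) (hx : ∑ j, |x j| ≤ √(#S : ℝ)) :
    ∑ j ∈ Sᶜ, g j * x j ≤ √(∑ i ∈ S, g i ^ 2) := by
  have hcard : (0 : ℝ) < #S := by exact_mod_cast hS.card_pos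
  set m := √((∑ i ∈ S, g i ^ 2) / #S)
  have hg (j) (hj : j ∈ Sᶜ) : |g j| ≤ m := by
    refine abs_le_sqrt ?_
    rw [le_div_iff₀ hcard, ← nsmul_eq_mul', ← sum_const]
    exact sum_le_sum fun i hi => htop i hi j (mem_compl.1 hj)
  calc ∑ j ∈ Sᶜ, g j * x j ≤ ∑ j ∈ Sᶜ, m * |x j| := sum_le_sum fun j hj =>
        (le_abs_self _).trans (by rw [abs_mul]; gcongr; exact hg j hj)
    _ ≤ m * ∑ j, |x j| := by
        rw [← mul_sum]
        gcongr
        exact subset_univ _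
    _ ≤ m * √(#S : ℝ) := by gcongr
    _ = √(∑ i ∈ S, g i ^ 2) := by
        rw [← sqrt_mul (by positivity), div_mul_cancel₀ _ hcard.ne']

theorem sum_mul_le_two_sqrt_sum_sq (hS : S.Nonempty)
    (htop : ∀ i ∈ S, ∀ j ∉ S, g j ^ 2 ≤ g i ^ 2) (hx₂ : ∑ j, x j ^ 2 ≤ 1)
    (hx₁ : ∑ j, |x j| ≤ √(#S : ℝ)) :
    ∑ j, g j * x j ≤ 2 * √(∑ i ∈ S, g i ^ 2) := by
  have hon : ∑ j ∈ S, g j * x j ≤ √(∑ i ∈ S, g i ^ 2) :=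
    calc ∑ j ∈ S, g j * x j ≤ √(∑ i ∈ S, g i ^ 2) * √(∑ j ∈ S, x j ^ 2) :=
          sum_mul_le_sqrt_mul_sqrt S g x
      _ ≤ √(∑ i ∈ S, g i ^ 2) := by
          refine mul_le_of_le_one_right (sqrt_nonneg _) (sqrt_le_one.2 ?_)
          exact (sum_le_univ_sum_of_nonneg fun j => sq_nonneg _).trans hx₂
  rw [← sum_add_sum_compl S]
  linarith [sum_compl_mul_le_sqrt_sum_sq hS htop hx₁]

theorem sum_mul_le_two_sqrt_sup'_sum_sq {s : ℕ} (hs : 0 < s)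
    (hne : (powersetCard s (univ : Finset ι)).Nonempty) (g : ι → ℝ)
    (hx₂ : ∑ j, x j ^ 2 ≤ 1) (hx₁ : ∑ j, |x j| ≤ √(s : ℝ)) :
    ∑ j, g j * x j ≤ 2 * √((powersetCard s univ).sup' hne fun S => ∑ i ∈ S, g i ^ 2) := by
  obtain ⟨S, rfl, htop⟩ := exists_card_eq_forall_notMem_le (fun j => g j ^ 2)
    (by simpa using powersetCard_nonempty.1 hne)
  calc ∑ j, g j * x j ≤ 2 * √(∑ i ∈ S, g i ^ 2) :=
        sum_mul_le_two_sqrt_sum_sq (card_pos.1 hs) htop hx₂ hx₁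
    _ ≤ _ := by
        gcongr
        exact le_sup' (fun S => ∑ i ∈ S, g i ^ 2) (mem_powersetCard_univ.2 rfl)

end TopCoordinates

section MaximalInequality

variable {Ω ι : Type*} [MeasurableSpace Ω] {μ : Measure Ω} {s : Finset ι} {X : ι → Ω → ℝ} {l : ℝ}

theorem Finset.sup'_le_log_add_sum_exp (hs : s.Nonempty) (f : ι → ℝ) {c : ℝ} (hl : 0 < l)
    (hc : 0 < c) : s.sup' hs f ≤ (log c + c⁻¹ * ∑ i ∈ s, exp (l * f i)) / l := by
  refine sup'_le hs f fun i hi => ?_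
  rw [le_div_iff₀ hl]
  have hlog : l * f i - log c ≤ c⁻¹ * exp (l * f i) := by
    have := log_le_sub_one_of_pos (x := c⁻¹ * exp (l * f i)) (by positivity)
    rw [log_mul (by positivity) (exp_pos _).ne', log_inv, log_exp] at this
    linarith
  have hsum : c⁻¹ * exp (l * f i) ≤ c⁻¹ * ∑ j ∈ s, exp (l * f j) := by
    gcongr
    exact single_le_sum (f := fun j => exp (l * f j)) (fun j _ => (exp_pos _).le) hi
  linarith

-- A non-integrable `f` has integral `0`, so only `g` needs to be integrable.
theorem integral_le_integral_of_le_of_nonneg {f g : Ω → ℝ} (hg : Integrable g μ) (hg0 : 0 ≤ g)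
    (hfg : f ≤ g) : ∫ ω, f ω ∂μ ≤ ∫ ω, g ω ∂μ := by
  by_cases hf : Integrable f μ
  · exact integral_mono hf hg hfg
  · rw [integral_undef hf]
    exact integral_nonneg hg0

theorem integrable_finset_sup'_of_nonneg (hs : s.Nonempty) (hl : 0 < l)
    (hX : ∀ i ∈ s, Measurable (X i)) (hX0 : ∀ i ∈ s, ∀ ω, 0 ≤ X i ω)
    (hexp : ∀ i ∈ s, Integrable (fun ω => exp (l * X i ω)) μ) :
    Integrable (fun ω => s.sup' hs (X · ω)) μ := by
  refine ((integrable_finsetSum s hexp).const_mul l⁻¹).mono' ?_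
    (Filter.Eventually.of_forall fun ω => ?_)
  · convert (measurable_sup' hs hX).aestronglyMeasurable using 1
    ext ω
    rw [Finset.sup'_apply]
  obtain ⟨i, hi⟩ := id hs
  have h0 : 0 ≤ s.sup' hs (X · ω) := (hX0 i hi ω).trans (le_sup' (X · ω) hi)
  rw [norm_eq_abs, abs_of_nonneg h0]
  simpa [div_eq_inv_mul] using sup'_le_log_add_sum_exp hs (X · ω) hl one_pos

theorem integral_finset_sup'_le [IsProbabilityMeasure μ] (hs : s.Nonempty) (hl : 0 < l)
    (hX : ∀ i ∈ s, Measurable (X i)) (hX0 : ∀ i ∈ s, ∀ ω, 0 ≤ X i ω)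
    (hexp : ∀ i ∈ s, Integrable (fun ω => exp (l * X i ω)) μ) :
    ∫ ω, s.sup' hs (X · ω) ∂μ ≤ (log (∑ i ∈ s, ∫ ω, exp (l * X i ω) ∂μ) + 1) / l := by
  set Z := ∑ i ∈ s, ∫ ω, exp (l * X i ω) ∂μ
  have hZ : 0 < Z := sum_pos (fun i hi => integral_exp_pos (hexp i hi)) hs
  have hsum := integrable_finsetSum s hexp
  calc ∫ ω, s.sup' hs (X · ω) ∂μ
      ≤ ∫ ω, (log Z + Z⁻¹ * ∑ i ∈ s, exp (l * X i ω)) / l ∂μ :=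
        integral_mono (integrable_finset_sup'_of_nonneg hs hl hX hX0 hexp)
          (((integrable_const _).add (hsum.const_mul _)).div_const _)
          fun ω => sup'_le_log_add_sum_exp hs (X · ω) hl hZ
    _ = (log Z + 1) / l := by
        rw [integral_div, integral_add (integrable_const _) (hsum.const_mul _), integral_const,
          integral_const_mul, integral_finsetSum s hexp, inv_mul_cancel₀ hZ.ne']
        simp

end MaximalInequality

section Gaussian

theorem gaussianPDFReal_zero_one_mul_exp_mul_sq (a x : ℝ) :
    gaussianPDFReal 0 1 x * exp (a * x ^ 2) = (√(2 * π))⁻¹ * exp (-(2⁻¹ - a) * x ^ 2) := by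
  rw [gaussianPDFReal, mul_assoc, ← exp_add]
  simp only [sub_zero, NNReal.coe_one, mul_one]
  congr 2
  ring

theorem integrable_exp_mul_sq_gaussianReal {a : ℝ} (ha : a < 2⁻¹) :
    Integrable (fun x => exp (a * x ^ 2)) (gaussianReal 0 1) := by
  rw [gaussianReal_of_var_ne_zero 0 one_ne_zero, integrable_withDensity_iff_integrable_smul'
    (measurable_gaussianPDF 0 1) (ae_of_all _ fun _ => gaussianPDF_lt_top)]
  simp_rw [toReal_gaussianPDF, smul_eq_mul, gaussianPDFReal_zero_one_mul_exp_mul_sq]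
  exact (integrable_exp_neg_mul_sq (by linarith)).const_mul _

theorem integral_exp_mul_sq_gaussianReal {a : ℝ} (ha : a < 2⁻¹) :
    ∫ x, exp (a * x ^ 2) ∂(gaussianReal 0 1) = (√(1 - 2 * a))⁻¹ := by
  simp_rw [integral_gaussianReal_eq_integral_smul one_ne_zero, smul_eq_mul,
    gaussianPDFReal_zero_one_mul_exp_mul_sq, integral_const_mul, integral_gaussian]
  have h : π / (2⁻¹ - a) = 2 * π / (1 - 2 * a) := by field_simp
  have hπ : 0 < √(2 * π) := by positivity
  rw [h, sqrt_div' _ (by linarith), inv_mul_eq_div, div_div_cancel_left' hπ.ne']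

variable {ι : Type*} [Fintype ι]

theorem exp_mul_sum_sq_eq_prod_ite [DecidableEq ι] (S : Finset ι) (a : ℝ) (g : ι → ℝ) :
    exp (a * ∑ j ∈ S, g j ^ 2) = ∏ j, if j ∈ S then exp (a * g j ^ 2) else 1 := by
  rw [prod_ite_mem, univ_inter, mul_sum, exp_sum]

theorem integrable_exp_mul_sum_sq_pi_gaussianReal (S : Finset ι) {a : ℝ} (ha : a < 2⁻¹) :
    Integrable (fun g : ι → ℝ => exp (a * ∑ j ∈ S, g j ^ 2))
      (Measure.pi fun _ => gaussianReal 0 1) := by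
  classical
  simp_rw [exp_mul_sum_sq_eq_prod_ite]
  refine Integrable.fintype_prod (f := fun j x => if j ∈ S then exp (a * x ^ 2) else 1)
    fun j => ?_
  split_ifs
  · exact integrable_exp_mul_sq_gaussianReal ha
  · exact integrable_const 1

theorem integral_exp_mul_sum_sq_pi_gaussianReal (S : Finset ι) {a : ℝ} (ha : a < 2⁻¹) :
    ∫ g : ι → ℝ, exp (a * ∑ j ∈ S, g j ^ 2) ∂(Measure.pi fun _ => gaussianReal 0 1)
      = (√(1 - 2 * a))⁻¹ ^ #S := by
  classical
  simp_rw [exp_mul_sum_sq_eq_prod_ite]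
  rw [integral_fintype_prod_eq_prod (fun j x => if j ∈ S then exp (a * x ^ 2) else 1)]
  have h (j : ι) : ∫ x, (if j ∈ S then exp (a * x ^ 2) else 1) ∂(gaussianReal 0 1)
      = if j ∈ S then (√(1 - 2 * a))⁻¹ else 1 := by
    split_ifs
    · exact integral_exp_mul_sq_gaussianReal ha
    · simp
  simp_rw [h]
  rw [prod_ite_mem, univ_inter, prod_const]

theorem integrable_sup'_sum_sq_pi_gaussianReal {s : ℕ}
    (hne : (powersetCard s (univ : Finset ι)).Nonempty) :
    Integrable (fun g => (powersetCard s univ).sup' hne fun S => ∑ i ∈ S, g i ^ 2)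
      (Measure.pi fun _ : ι => gaussianReal 0 1) :=
  integrable_finset_sup'_of_nonneg hne (by norm_num : (0 : ℝ) < 4⁻¹) (fun S _ => by fun_prop)
    (fun S _ g => sum_nonneg fun i _ => sq_nonneg (g i))
    (fun S _ => integrable_exp_mul_sum_sq_pi_gaussianReal S (by norm_num))

theorem integral_sup'_sum_sq_pi_gaussianReal_le {s : ℕ}
    (hne : (powersetCard s (univ : Finset ι)).Nonempty) :
    ∫ g, (powersetCard s univ).sup' hne (fun S => ∑ i ∈ S, g i ^ 2)
        ∂(Measure.pi fun _ : ι => gaussianReal 0 1)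
      ≤ 4 * (log ((Fintype.card ι).choose s * √2 ^ s) + 1) := by
  have hquarter : (4⁻¹ : ℝ) < 2⁻¹ := by norm_num
  have hmgf : (√(1 - 2 * 4⁻¹ : ℝ))⁻¹ = √2 := by
    rw [show (1 : ℝ) - 2 * 4⁻¹ = 2⁻¹ by norm_num, sqrt_inv, inv_inv]
  have := integral_finset_sup'_le hne (by norm_num : (0 : ℝ) < 4⁻¹)
    (fun S _ => by fun_prop) (fun S _ g => sum_nonneg fun i _ => sq_nonneg (g i))
    (fun S _ => integrable_exp_mul_sum_sq_pi_gaussianReal S hquarter)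
    (μ := Measure.pi fun _ : ι => gaussianReal 0 1)
  rw [sum_congr rfl fun S hS => by
      rw [integral_exp_mul_sum_sq_pi_gaussianReal S hquarter, hmgf, mem_powersetCard_univ.1 hS],
    sum_const, card_powersetCard, card_univ, nsmul_eq_mul] at this
  simpa [div_eq_mul_inv, mul_comm] using this

end Gaussian

instance isProbabilityMeasure_stdGaussianVec (N : ℕ) : IsProbabilityMeasure (stdGaussianVec N) := by
  unfold stdGaussianVec
  infer_instance

/-- Lemma 4 (Lemma 16 in Cahill–Mixon): there is an absolute constant c such that
w(√s B_{ℓ1} ∩ S^{N−1}) ≤ c √(s log(eN/s)) for all positive integers s ≤ N. -/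
theorem gaussian_width_sqrt_s_ball :
    ∃ c : ℝ, 0 < c ∧ ∀ (s N : ℕ), 0 < s → s ≤ N →
      gaussianWidth {x : Fin N → ℝ | l1Norm x ≤ Real.sqrt s ∧ l2Norm x = 1} ≤
        c * Real.sqrt (s * Real.log (Real.exp 1 * N / s)) := by
  refine ⟨7, by norm_num, fun s N hs hsN => ?_⟩
  set L := log (exp 1 * N / s)
  have hsL : 0 < s * L := mul_pos (by exact_mod_cast hs)
    (one_pos.trans_le (one_le_log_exp_mul_div (by exact_mod_cast hs) (by exact_mod_cast hsN)))
  have hne : (powersetCard s (univ : Finset (Fin N))).Nonempty :=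
    powersetCard_nonempty.2 (by simpa using hsN)
  set M : (Fin N → ℝ) → ℝ := fun g => (powersetCard s univ).sup' hne fun S => ∑ i ∈ S, g i ^ 2
  have hM0 (g) : 0 ≤ M g := by
    obtain ⟨S, hS⟩ := hne
    exact (sum_nonneg fun i _ => sq_nonneg (g i)).trans (le_sup' (fun S => ∑ i ∈ S, g i ^ 2) hS)
  have hM : Integrable M (stdGaussianVec N) := integrable_sup'_sum_sq_pi_gaussianReal hne
  have hEM : ∫ g, M g ∂(stdGaussianVec N) ≤ 12 * (s * L) := by
    refine (integral_sup'_sum_sq_pi_gaussianReal_le hne).trans ?_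
    rw [Fintype.card_fin]
    linarith [log_choose_mul_sqrt_two_pow_add_one_le hs hsN]
  set t := 4 * √(s * L)
  have ht : 0 < t := by positivity
  have hwidth (g : Fin N → ℝ) : sSup ((fun x : Fin N → ℝ => ∑ j, g j * x j) ''
      {x | l1Norm x ≤ √s ∧ l2Norm x = 1}) ≤ t + M g / t := by
    refine Real.sSup_le ?_ (by positivity [hM0 g])
    rintro _ ⟨x, ⟨hx₁, hx₂⟩, rfl⟩
    exact (sum_mul_le_two_sqrt_sup'_sum_sq hs hne g (sqrt_eq_one.1 hx₂).le hx₁).trans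
      (two_mul_sqrt_le_add_div (hM0 g) ht)
  calc gaussianWidth {x : Fin N → ℝ | l1Norm x ≤ √s ∧ l2Norm x = 1}
      ≤ ∫ g, (t + M g / t) ∂(stdGaussianVec N) :=
        integral_le_integral_of_le_of_nonneg ((integrable_const t).add (hM.div_const t))
          (fun g => by positivity [hM0 g]) hwidth
    _ = t + (∫ g, M g ∂(stdGaussianVec N)) / t := by
        rw [integral_add (integrable_const t) (hM.div_const t), integral_const, integral_div]
        simp
    _ ≤ t + 12 * (s * L) / t := by gcongr
    _ = 7 * √(s * L) := by
        field_simp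
        nlinarith [sq_sqrt hsL.le]
end
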